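/- Let P₁ = (0,0,0), P₂ = (a,b,0) with (a,b) ≠ (0,0). A point (x,y,z) with z ≠ 0 is translation-equidistant from P₁ and P₂ if and only if e^{2z}·a(a - 2x) + b(b - 2y) = 0; and a point (x,y,0) is translation-equidistant from P₁ and P₂ if and only if x·a + y·b = (a² + b²)/2. -/

import Mathlib

/-- Translation distance from the origin to `(x,y,z)` in Sol. -/
noncomputable def solDistO (p : ℝ × ℝ × ℝ) : ℝ :=
  if p.2.2 ≠ 0 then
    (|p.2.2| / |Real.exp p.2.2 - 1|) *
      Real.sqrt (p.1 ^ 2 * Real.exp (2 * p.2.2) + (Real.exp p.2.2 - 1) ^ 2 + p.2.1 ^ 2)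
  else Real.sqrt (p.1 ^ 2 + p.2.1 ^ 2)

/-- Translation distance between two points of Sol, computed as `d^t(O, T⁻¹_P(Q))`. -/
noncomputable def solDist (P Q : ℝ × ℝ × ℝ) : ℝ :=
  solDistO ((Q.1 - P.1) * Real.exp P.2.2, (Q.2.1 - P.2.1) * Real.exp (-P.2.2), Q.2.2 - P.2.2)

/-!
The formula for `d^t(O, (u, v, z))` is invariant under `(u, v, z) ↦ (u e^z, v e^{-z}, -z)`, so the
distance from `(x, y, z)` to `(a, b, 0)` equals `d^t(O, (a - x, b - y, z))`. Both distances to the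
bisected pair then share the height `z` and hence the prefactor `|z| / |e^z - 1|`, and equality
reduces to `x² e^{2z} + y² = (a - x)² e^{2z} + (b - y)²`, which is the claimed linear equation.
-/

open Real

lemma solDist_zero_left (p : ℝ × ℝ × ℝ) : solDist (0, 0, 0) p = solDistO p := by
  simp [solDist]

lemma solDistO_neg (u v z : ℝ) :
    solDistO (u * exp z, v * exp (-z), -z) = solDistO (u, v, z) := by
  rcases eq_or_ne z 0 with rfl | hz
  · simp
  have hinner : (u * exp z) ^ 2 * exp (2 * -z) + (exp (-z) - 1) ^ 2 + (v * exp (-z)) ^ 2 =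
      exp (-z) ^ 2 * (u ^ 2 * exp (2 * z) + (exp z - 1) ^ 2 + v ^ 2) := by
    rw [show 2 * -z = -z + -z by ring, show 2 * z = z + z by ring, exp_add, exp_add, exp_neg]
    field_simp
    ring
  have habs : |exp (-z) - 1| = exp (-z) * |exp z - 1| := by
    rw [← abs_of_pos (exp_pos (-z)), ← abs_mul, abs_of_pos (exp_pos (-z)), mul_sub, ← exp_add,
      neg_add_cancel, exp_zero, mul_one, abs_sub_comm]
  simp only [solDistO, ne_eq, neg_eq_zero, hz, not_false_eq_true, if_true, abs_neg, hinner, habs]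
  rw [sqrt_mul' _ (by positivity), sqrt_sq (exp_pos _).le]
  field_simp

lemma solDist_horizontal_right (x y z a b : ℝ) :
    solDist (x, y, z) (a, b, 0) = solDistO (a - x, b - y, z) := by
  simp only [solDist, zero_sub, solDistO_neg]

lemma solDistO_eq_solDistO_iff (x y x' y' z : ℝ) :
    solDistO (x, y, z) = solDistO (x', y', z) ↔
      x ^ 2 * exp (2 * z) + y ^ 2 = x' ^ 2 * exp (2 * z) + y' ^ 2 := by
  rcases eq_or_ne z 0 with rfl | hz
  · simp only [solDistO, ne_eq, not_true_eq_false, if_false, mul_zero, exp_zero, mul_one]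
    exact sqrt_inj (by positivity) (by positivity)
  have hc : |z| / |exp z - 1| ≠ 0 := by
    simp [hz, sub_eq_zero]
  simp only [solDistO, ne_eq, hz, not_false_eq_true, if_true, mul_right_inj' hc]
  rw [sqrt_inj (by positivity) (by positivity), add_right_comm, add_right_comm (x' ^ 2 * _),
    add_left_inj]

theorem sol_bisector_horizontal_general (a b : ℝ) :
    (∀ x y z : ℝ, z ≠ 0 →
      (solDist ((0 : ℝ), (0 : ℝ), (0 : ℝ)) (x, y, z) = solDist (x, y, z) (a, b, 0) ↔
        Real.exp (2 * z) * a * (a - 2 * x) + b * (b - 2 * y) = 0)) ∧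
    (∀ x y : ℝ,
      (solDist ((0 : ℝ), (0 : ℝ), (0 : ℝ)) (x, y, 0) = solDist (x, y, 0) (a, b, 0) ↔
        x * a + y * b = (a ^ 2 + b ^ 2) / 2)) := by
  have bisector (x y z : ℝ) :
      solDist (0, 0, 0) (x, y, z) = solDist (x, y, z) (a, b, 0) ↔
        exp (2 * z) * a * (a - 2 * x) + b * (b - 2 * y) = 0 := by
    rw [solDist_zero_left, solDist_horizontal_right, solDistO_eq_solDistO_iff]
    constructor <;> intro h <;> linarith
  refine ⟨fun x y z _ => bisector x y z, fun x y => ?_⟩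
  rw [bisector, mul_zero, exp_zero, one_mul]
  constructor <;> intro h <;> linarith

/-- Equation of the translation-like bisector surface of the origin and `(a,b,0)`. -/
theorem sol_bisector_horizontal (a b : ℝ) (hab : (a, b) ≠ ((0 : ℝ), (0 : ℝ))) :
    (∀ x y z : ℝ, z ≠ 0 →
      (solDist ((0 : ℝ), (0 : ℝ), (0 : ℝ)) (x, y, z) = solDist (x, y, z) (a, b, 0) ↔
        Real.exp (2 * z) * a * (a - 2 * x) + b * (b - 2 * y) = 0)) ∧
    (∀ x y : ℝ,
      (solDist ((0 : ℝ), (0 : ℝ), (0 : ℝ)) (x, y, 0) = solDist (x, y, 0) (a, b, 0) ↔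
        x * a + y * b = (a ^ 2 + b ^ 2) / 2)) :=
  sol_bisector_horizontal_general a b
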